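/- (Maximum tuple incremental update) Let σ be an execution, ρ·f a prefix of σ with ρ a prefix and f an event, and b₁,...,b_m a permutation of a subsequence of the pattern a₁,...,a_d. If lbl(f) = b_m and the tuple max(Ad(ρ, ⟨b₁,...,b_{m-1}⟩))·f is partially admissible, then max(Ad(ρ·f, ⟨b₁,...,b_m⟩)) = max(Ad(ρ, ⟨b₁,...,b_{m-1}⟩))·f; otherwise max(Ad(ρ·f, ⟨b₁,...,b_m⟩)) = max(Ad(ρ, ⟨b₁,...,b_m⟩)). -/
import Mathlib


variable {α : Type*}

/-- The trace partial order on the events (positions) of the execution `σ` induced by the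
dependence relation `D = Σ×Σ \ I`: the reflexive-transitive closure of the relation ordering
`i` before `j` whenever `i` occurs before `j` in `σ` and their labels are dependent. -/
def tracePO (σ : List α) (I : α → α → Prop) : Fin σ.length → Fin σ.length → Prop :=
  Relation.ReflTransGen (fun i j => i < j ∧ ¬ I (σ.get i) (σ.get j))

/-- Partial (local) admissibility of a tuple `τ` of events with respect to the stable-sort
permutation `π` (mapping target positions to source positions): for any two target positions
`s < r`, the event at target position `r` must not be below the event at target position `s`
in the trace partial order. -/
def Adm (σ : List α) (I : α → α → Prop) {m : ℕ} (π : Equiv.Perm (Fin m))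
    (τ : Fin m → Fin σ.length) : Prop :=
  ∀ r s : Fin m, s < r → ¬ tracePO σ I (τ (π r)) (τ (π s))

/-- `AdSet σ I b π k` is the set of partially admissible tuples over the length-`k` prefix of
`σ` with label sequence `b`: tuples of events of the prefix, listed in `σ`-order, whose labels
are `b₁, …, b_m`, satisfying the local admissibility condition w.r.t. the stable-sort
permutation `π`. -/
def AdSet (σ : List α) (I : α → α → Prop) {m : ℕ} (b : Fin m → α)
    (π : Equiv.Perm (Fin m)) (k : ℕ) : Set (Fin m → Fin σ.length) :=
  {τ | (∀ i, (τ i : ℕ) < k) ∧ StrictMono τ ∧ (∀ i, σ.get (τ i) = b i) ∧ Adm σ I π τ}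

private lemma tracePO_le {σ : List α} {I : α → α → Prop} {i j : Fin σ.length}
    (h : tracePO σ I i j) : i ≤ j := by
  induction h with
  | refl => exact le_refl _
  | tail _ step ih => exact le_trans ih (le_of_lt step.1)

private lemma tracePO_mono {σ : List α} {I : α → α → Prop} (hirr : ∀ a, ¬ I a a)
    {x y w : Fin σ.length} (hxy : x ≤ y) (hlab : σ.get x = σ.get y)
    (h : tracePO σ I y w) : tracePO σ I x w := by
  rcases Relation.ReflTransGen.cases_head h with h | ⟨c, hc, hcw⟩
  · subst h
    rcases eq_or_lt_of_le hxy with h | h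
    · exact h ▸ Relation.ReflTransGen.refl
    · exact Relation.ReflTransGen.single ⟨h, by rw [hlab]; exact hirr _⟩
  · exact Relation.ReflTransGen.head ⟨lt_of_le_of_lt hxy hc.1, by rw [hlab]; exact hc.2⟩ hcw

private lemma restrict_mem {σ : List α} {I : α → α → Prop} {m : ℕ} {b : Fin (m + 1) → α}
    {π : Equiv.Perm (Fin (m + 1))} {π' : Equiv.Perm (Fin m)}
    (hπ' : ∀ r : Fin m, Fin.castSucc (π' r) = π ((π.symm (Fin.last m)).succAbove r))
    {k : ℕ} {τ : Fin (m + 1) → Fin σ.length}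
    (hτ : τ ∈ AdSet σ I b π (k + 1)) :
    (fun j => τ (Fin.castSucc j)) ∈ AdSet σ I (fun i => b i.castSucc) π' k := by
  obtain ⟨hbd, hsm, hlab, hadm⟩ := hτ
  refine ⟨?_, ?_, ?_, ?_⟩
  · intro j
    have h1 : τ (Fin.castSucc j) < τ (Fin.last m) := hsm (Fin.castSucc_lt_last j)
    have h2 : (τ (Fin.last m) : ℕ) < k + 1 := hbd _
    exact lt_of_lt_of_le h1 (Nat.lt_succ_iff.mp h2)
  · intro i j hij
    exact hsm (Fin.castSucc_lt_castSucc_iff.mpr hij)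
  · intro j; exact hlab _
  · intro r s hrs
    simp only
    rw [hπ' r, hπ' s]
    exact hadm _ _ ((Fin.succAbove_lt_succAbove_iff (p := π.symm (Fin.last m))).mpr hrs)

/-- Maximum partially admissible tuple, incremental update. Let `ρ` be the length-`k` prefix
of `σ`, let `ρ·f` also be a prefix of `σ` (`f` is the event at position `k`), and let
`b₁, …, b_{m+1}` be a permutation (via the stable-sort permutation `π`, with `π'` the induced
stable-sort permutation for the prefix label sequence `b₁, …, b_m`) of a subsequence `js` of
the pattern `as`. Let `τmax` be the maximum of `Ad(ρ, ⟨b₁,…,b_m⟩)`. If `lbl f = b_{m+1}` and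
`τmax·f` is partially admissible, then `τmax·f` is the maximum of `Ad(ρ·f, ⟨b₁,…,b_{m+1}⟩)`;
otherwise the maxima of `Ad(ρ·f, ⟨b₁,…,b_{m+1}⟩)` and `Ad(ρ, ⟨b₁,…,b_{m+1}⟩)` coincide. -/
theorem adm_max_incremental (σ : List α)
    (I : α → α → Prop) (hirr : ∀ a, ¬ I a a) (hsym : ∀ a b, I a b → I b a)
    (as : List α) {m : ℕ} (b js : Fin (m + 1) → α) (hjs : (List.ofFn js).Sublist as)
    (π : Equiv.Perm (Fin (m + 1))) (hπ : ∀ r, b (π r) = js r)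
    (hstable : ∀ r s : Fin (m + 1), r < s → js r = js s → π r < π s)
    (π' : Equiv.Perm (Fin m))
    (hπ' : ∀ r : Fin m, Fin.castSucc (π' r) = π ((π.symm (Fin.last m)).succAbove r))
    (k : ℕ) (hk : k + 1 ≤ σ.length) (f : Fin σ.length) (hf : (f : ℕ) = k)
    (τmax : Fin m → Fin σ.length)
    (hmax : IsGreatest (AdSet σ I (fun i => b i.castSucc) π' k) τmax) :
    ((σ.get f = b (Fin.last m) ∧ Adm σ I π (Fin.snoc τmax f)) →
      IsGreatest (AdSet σ I b π (k + 1)) (Fin.snoc τmax f)) ∧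
    (¬ (σ.get f = b (Fin.last m) ∧ Adm σ I π (Fin.snoc τmax f)) →
      ∀ τ : Fin (m + 1) → Fin σ.length,
        IsGreatest (AdSet σ I b π (k + 1)) τ ↔ IsGreatest (AdSet σ I b π k) τ) := by
  set e := π.symm (Fin.last m) with he
  have hπe : π e = Fin.last m := Equiv.apply_symm_apply π _
  -- if a restriction lies below τmax and the last entry is f, snoc τmax f is admissible
  have key : ∀ τ : Fin (m + 1) → Fin σ.length, τ ∈ AdSet σ I b π (k + 1) →
      τ (Fin.last m) = f → Adm σ I π (Fin.snoc τmax f) := by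
    intro τ hτ hlast
    have hτ' := restrict_mem hπ' hτ
    have hle := hmax.2 hτ'
    obtain ⟨hbd, hsm, hlab, hadm⟩ := hτ
    intro r s hrs
    by_cases hs : s = e
    · subst hs
      have hrne : r ≠ e := ne_of_gt hrs
      obtain ⟨r₀, hr₀⟩ := Fin.exists_succAbove_eq hrne
      have hπr : π r = Fin.castSucc (π' r₀) := by rw [hπ' r₀, hr₀]
      rw [hπe, hπr, Fin.snoc_last, Fin.snoc_castSucc]
      intro htr
      have hx : τ (Fin.castSucc (π' r₀)) ≤ τmax (π' r₀) := hle (π' r₀)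
      have hlx : σ.get (τ (Fin.castSucc (π' r₀))) = σ.get (τmax (π' r₀)) := by
        rw [hlab, hmax.1.2.2.1]
      have htr' : tracePO σ I (τ (Fin.castSucc (π' r₀))) f :=
        tracePO_mono hirr hx hlx htr
      have := hadm r e hrs
      rw [hπe, hπr, hlast] at this
      exact this htr'
    · by_cases hr : r = e
      · subst hr
        obtain ⟨s₀, hs₀⟩ := Fin.exists_succAbove_eq hs
        have hπs : π s = Fin.castSucc (π' s₀) := by rw [hπ' s₀, hs₀]
        rw [hπe, hπs, Fin.snoc_last, Fin.snoc_castSucc]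
        intro htr
        have h1 : (f : ℕ) ≤ (τmax (π' s₀) : ℕ) := tracePO_le htr
        have h2 : (τmax (π' s₀) : ℕ) < k := hmax.1.1 _
        omega
      · obtain ⟨r₀, hr₀⟩ := Fin.exists_succAbove_eq hr
        obtain ⟨s₀, hs₀⟩ := Fin.exists_succAbove_eq hs
        have hπr : π r = Fin.castSucc (π' r₀) := by rw [hπ' r₀, hr₀]
        have hπs : π s = Fin.castSucc (π' s₀) := by rw [hπ' s₀, hs₀]
        rw [hπr, hπs, Fin.snoc_castSucc, Fin.snoc_castSucc]
        have hlt : s₀ < r₀ := by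
          rw [← hr₀, ← hs₀] at hrs
          exact (Fin.succAbove_lt_succAbove_iff).mp hrs
        exact hmax.1.2.2.2 r₀ s₀ hlt
  constructor
  · rintro ⟨hlabf, hadm⟩
    constructor
    · refine ⟨?_, ?_, ?_, hadm⟩
      · intro i
        rcases Fin.eq_castSucc_or_eq_last i with ⟨j, rfl⟩ | rfl
        · rw [Fin.snoc_castSucc]; exact Nat.lt_succ_of_lt (hmax.1.1 j)
        · rw [Fin.snoc_last]; omega
      · intro i j hij
        rcases Fin.eq_castSucc_or_eq_last j with ⟨j₀, rfl⟩ | rfl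
        · obtain ⟨i₀, rfl⟩ := Fin.exists_castSucc_eq.mpr
            (ne_of_lt (lt_of_lt_of_le hij (le_of_lt (Fin.castSucc_lt_last j₀))))
          rw [Fin.snoc_castSucc, Fin.snoc_castSucc]
          exact hmax.1.2.1 (Fin.castSucc_lt_castSucc_iff.mp hij)
        · obtain ⟨i₀, rfl⟩ := Fin.exists_castSucc_eq.mpr (ne_of_lt hij)
          rw [Fin.snoc_castSucc, Fin.snoc_last]
          have : (τmax i₀ : ℕ) < k := hmax.1.1 i₀
          exact Fin.lt_def.mpr (by omega)
      · intro i
        rcases Fin.eq_castSucc_or_eq_last i with ⟨j, rfl⟩ | rfl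
        · rw [Fin.snoc_castSucc]; exact hmax.1.2.2.1 j
        · rw [Fin.snoc_last]; exact hlabf
    · intro τ hτ
      have hτ' := restrict_mem hπ' hτ
      have hle := hmax.2 hτ'
      intro i
      rcases Fin.eq_castSucc_or_eq_last i with ⟨j, rfl⟩ | rfl
      · rw [Fin.snoc_castSucc]; exact hle j
      · rw [Fin.snoc_last]
        have : (τ (Fin.last m) : ℕ) < k + 1 := hτ.1 _
        exact Fin.le_def.mpr (by omega)
  · intro hneg τ
    have hsets : AdSet σ I b π (k + 1) = AdSet σ I b π k := by
      ext τ₀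
      constructor
      · intro hτ₀
        have hlastne : τ₀ (Fin.last m) ≠ f := by
          intro hlast
          exact hneg ⟨hlast ▸ hτ₀.2.2.1 (Fin.last m), key τ₀ hτ₀ hlast⟩
        have hlastlt : (τ₀ (Fin.last m) : ℕ) < k := by
          have h1 : (τ₀ (Fin.last m) : ℕ) < k + 1 := hτ₀.1 _
          have h2 : (τ₀ (Fin.last m) : ℕ) ≠ k := by
            intro h; exact hlastne (Fin.ext (by omega))
          omega
        refine ⟨?_, hτ₀.2.1, hτ₀.2.2.1, hτ₀.2.2.2⟩
        intro i
        have : τ₀ i ≤ τ₀ (Fin.last m) := hτ₀.2.1.monotone (Fin.le_last i)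
        exact lt_of_le_of_lt this hlastlt
      · intro hτ₀
        exact ⟨fun i => Nat.lt_succ_of_lt (hτ₀.1 i), hτ₀.2.1, hτ₀.2.2.1, hτ₀.2.2.2⟩
    rw [hsets]
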